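/- Let Γ be a weighted signed forest on n vertices with m₊ positive edges, m₋ negative edges, and c connected components. Then the Laplacian inertia of Γ is (m₋, m₊, n − m₊ − m₋); equivalently, L(Γ) has exactly m₋ positive eigenvalues, m₊ negative eigenvalues, and nullity equal to c. -/

import Mathlib

open scoped Classical
open Polynomial

namespace SGPaper

/-- A weighted signed graph on `n` vertices, given by its symmetric hollow
matrix of edge weights (a nonzero entry `w i j` is the weight of the edge `ij`;
positive edges have positive weight, negative edges negative weight). -/
structure WSG (n : ℕ) where
  w : Matrix (Fin n) (Fin n) ℝ
  symm : w.IsSymm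
  loopless : ∀ i, w i i = 0

variable {n : ℕ}

/-- The underlying simple graph. -/
def WSG.graph (Γ : WSG n) : SimpleGraph (Fin n) :=
  SimpleGraph.fromRel (fun i j => Γ.w i j ≠ 0)

/-- The spanning subgraph of positive edges. -/
def WSG.posGraph (Γ : WSG n) : SimpleGraph (Fin n) :=
  SimpleGraph.fromRel (fun i j => 0 < Γ.w i j)

/-- The spanning subgraph of negative edges. -/
def WSG.negGraph (Γ : WSG n) : SimpleGraph (Fin n) :=
  SimpleGraph.fromRel (fun i j => Γ.w i j < 0)

/-- Number of connected components of a graph. -/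
noncomputable def comps {V : Type*} (G : SimpleGraph V) : ℕ :=
  Nat.card G.ConnectedComponent

/-- Weighted Laplacian `L = A - D`. -/
def WSG.lap (Γ : WSG n) : Matrix (Fin n) (Fin n) ℝ :=
  Γ.w - Matrix.diagonal (fun i => ∑ j, Γ.w i j)

theorem WSG.lap_isHermitian (Γ : WSG n) : Γ.lap.IsHermitian := by
  have h : Γ.lap.IsSymm := Γ.symm.sub (Matrix.isSymm_diagonal _)
  show Matrix.conjTranspose Γ.lap = Γ.lap
  rw [Matrix.conjTranspose_eq_transpose_of_trivial]
  exact h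

/-- Number of positive eigenvalues of the Laplacian. -/
noncomputable def WSG.nPos (Γ : WSG n) : ℕ :=
  (Finset.univ.filter fun i => 0 < Γ.lap_isHermitian.eigenvalues i).card

/-- Number of negative eigenvalues of the Laplacian. -/
noncomputable def WSG.nNeg (Γ : WSG n) : ℕ :=
  (Finset.univ.filter fun i => Γ.lap_isHermitian.eigenvalues i < 0).card

/-- Multiplicity of `0` as an eigenvalue of the Laplacian. -/
noncomputable def WSG.nZero (Γ : WSG n) : ℕ :=
  (Finset.univ.filter fun i => Γ.lap_isHermitian.eigenvalues i = 0).card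

/-- The Laplacian inertia `(n₊, n₋, n₀)`. -/
noncomputable def WSG.inertia (Γ : WSG n) : ℕ × ℕ × ℕ := (Γ.nPos, Γ.nNeg, Γ.nZero)

end SGPaper

/-!
The Laplacian's quadratic form is `x ↦ -(∑ i j, w i j * (x i - x j) ^ 2) / 2`. In a forest every
edge is a bridge, so the indicator of the vertices on one side of an edge jumps across that edge
and no other. Combinations of these indicators over the negative (positive) edges therefore span
a space of dimension `m₋` (`m₊`) on which the form is positive (negative) definite, which gives
`n₊ ≥ m₋` and `n₋ ≥ m₊`. Functions constant on components lie in the kernel, so `n₀ ≥ c`; since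
every graph has `n ≤ m₊ + m₋ + c` and `n₊ + n₋ + n₀ = n`, all three bounds are equalities.
-/

open Matrix Finset

lemma card_pos_add_card_neg_add_card_zero {ι : Type*} [Fintype ι] (f : ι → ℝ) :
    #{i | 0 < f i} + #{i | f i < 0} + #{i | f i = 0} = Fintype.card ι := by
  simp only [card_filter, ← sum_add_distrib, Fintype.card_eq_sum_ones]
  refine sum_congr rfl fun i _ => ?_
  rcases lt_trichotomy (f i) 0 with h | h | h
  · simp [h, h.ne, h.not_gt]
  · simp [h]
  · simp [h, h.ne', h.not_gt]

lemma Sym2.out_mk_eq_or {α : Type*} (i j : α) :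
    (s(i, j)).out = (i, j) ∨ (s(i, j)).out = (j, i) := by
  have h : s((s(i, j)).out.1, (s(i, j)).out.2) = s(i, j) := Quot.out_eq _
  rcases Sym2.eq_iff.mp h with ⟨h1, h2⟩ | ⟨h1, h2⟩
  · exact Or.inl (Prod.ext h1 h2)
  · exact Or.inr (Prod.ext h1 h2)

namespace Matrix.IsHermitian

variable {ι : Type*} [Fintype ι] [DecidableEq ι] {A : Matrix ι ι ℝ}

lemma dotProduct_mulVec_self_eq_sum (hA : A.IsHermitian) (x : ι → ℝ) :
    x ⬝ᵥ A *ᵥ x = ∑ i, hA.eigenvalues i *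
      (star (hA.eigenvectorUnitary : Matrix ι ι ℝ) *ᵥ x) i ^ 2 := by
  conv_lhs => rw [hA.spectral_theorem, Unitary.conjStarAlgAut_apply]
  rw [← mulVec_mulVec, ← mulVec_mulVec, dotProduct_mulVec, ← mulVec_transpose]
  simp only [dotProduct, mulVec_diagonal, star_eq_conjTranspose,
    conjTranspose_eq_transpose_of_trivial, Function.comp_apply, RCLike.ofReal_real_eq_id, id]
  exact sum_congr rfl fun i _ => by ring

/-- The sign `ε` lets one statement bound the positive (`ε = 1`) and the negative (`ε = -1`)
index of inertia. -/
theorem finrank_le_card_pos_mul_eigenvalues (hA : A.IsHermitian) (ε : ℝ) {V : Type*}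
    [AddCommGroup V] [Module ℝ V] (F : V →ₗ[ℝ] ι → ℝ)
    (hF : ∀ v ≠ 0, 0 < ε * (F v ⬝ᵥ A *ᵥ F v)) :
    Module.finrank ℝ V ≤ #{i | 0 < ε * hA.eigenvalues i} := by
  let π : V →ₗ[ℝ] {i // 0 < ε * hA.eigenvalues i} → ℝ := LinearMap.funLeft ℝ ℝ Subtype.val ∘ₗ
    (star (hA.eigenvectorUnitary : Matrix ι ι ℝ)).mulVecLin ∘ₗ F
  have hπ : Function.Injective π := by
    rw [← LinearMap.ker_eq_bot, LinearMap.ker_eq_bot']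
    intro v hv
    by_contra hv0
    refine (hF v hv0).not_ge ?_
    rw [hA.dotProduct_mulVec_self_eq_sum, mul_sum]
    refine sum_nonpos fun i _ => ?_
    by_cases hi : 0 < ε * hA.eigenvalues i
    · have : (star (hA.eigenvectorUnitary : Matrix ι ι ℝ) *ᵥ F v) i = 0 := congrFun hv ⟨i, hi⟩
      simp [this]
    · rw [← mul_assoc]
      exact mul_nonpos_of_nonpos_of_nonneg (not_lt.mp hi) (sq_nonneg _)
  simpa [Fintype.card_subtype] using LinearMap.finrank_le_finrank_of_injective hπ

lemma card_eigenvalues_eq_zero (hA : A.IsHermitian) :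
    #{i | hA.eigenvalues i = 0} = Module.finrank ℝ (LinearMap.ker (toLin' A)) := by
  have hrank := hA.rank_eq_card_non_zero_eigs
  have hsplit := card_filter_add_card_filter_not (s := univ) (fun i => hA.eigenvalues i = 0)
  have hnullity := LinearMap.finrank_range_add_finrank_ker (toLin' A)
  rw [Fintype.card_subtype, Matrix.rank, ← toLin'_apply'] at hrank
  simp only [ne_eq] at hrank
  simp only [card_univ, Module.finrank_fintype_fun_eq_card] at hsplit hnullity
  omega

end Matrix.IsHermitian

namespace SimpleGraph

variable {V : Type*} (G : SimpleGraph V)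

noncomputable def sideIndicator (e : Sym2 V) (x : V) : ℝ :=
  if (G.deleteEdges {e}).Reachable e.out.1 x then 1 else 0

noncomputable def edgeCombination (S : Set (Sym2 V)) [Fintype S] : (S → ℝ) →ₗ[ℝ] V → ℝ :=
  Fintype.linearCombination ℝ fun e => G.sideIndicator e

variable {G}

lemma sideIndicator_eq_of_adj {e : Sym2 V} {i j : V} (h : (G.deleteEdges {e}).Adj i j) :
    G.sideIndicator e i = G.sideIndicator e j := by
  have : (G.deleteEdges {e}).Reachable e.out.1 i ↔ (G.deleteEdges {e}).Reachable e.out.1 j :=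
    ⟨(·.trans h.reachable), (·.trans h.symm.reachable)⟩
  simp only [sideIndicator, this]

lemma IsBridge.sideIndicator_sub_sq {i j : V} (h : G.IsBridge s(i, j)) :
    (G.sideIndicator s(i, j) i - G.sideIndicator s(i, j) j) ^ 2 = 1 := by
  have hij := isBridge_iff.mp h
  have hji : ¬(G.deleteEdges {s(i, j)}).Reachable j i := fun h => hij h.symm
  rcases Sym2.out_mk_eq_or i j with h | h <;> simp [sideIndicator, h, hij, hji]

lemma IsAcyclic.edgeCombination_sub_sq (hG : G.IsAcyclic) {S : Set (Sym2 V)} [Fintype S]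
    (c : S → ℝ) {i j : V} (hij : G.Adj i j) :
    (G.edgeCombination S c i - G.edgeCombination S c j) ^ 2
      = if h : s(i, j) ∈ S then c ⟨_, h⟩ ^ 2 else 0 := by
  have hother : ∀ e : S, e.1 ≠ s(i, j) →
      c e * (G.sideIndicator e i - G.sideIndicator e j) = 0 := fun e he => by
    rw [sideIndicator_eq_of_adj ((deleteEdges_adj ..).mpr ⟨hij, by simpa using he.symm⟩),
      sub_self, mul_zero]
  have hsum : G.edgeCombination S c i - G.edgeCombination S c j
      = ∑ e : S, c e * (G.sideIndicator e i - G.sideIndicator e j) := by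
    simp [edgeCombination, Fintype.linearCombination_apply, ← sum_sub_distrib, mul_sub]
  rw [hsum]
  split_ifs with h
  · rw [sum_eq_single ⟨_, h⟩ (fun e _ he => hother e (Subtype.coe_ne_coe.mpr he)) (by simp),
      mul_pow, (isAcyclic_iff_forall_adj_isBridge.mp hG hij).sideIndicator_sub_sq, mul_one]
  · rw [sum_eq_zero fun e _ => hother e fun he => h (he ▸ e.2), zero_pow two_ne_zero]

variable (G) in
theorem card_le_card_edgeSet_add_card_connectedComponent [Fintype V] :
    Fintype.card V ≤ Nat.card G.edgeSet + Nat.card G.ConnectedComponent := by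
  let Ψ : (V → ℝ) →ₗ[ℝ] G.edgeSet → ℝ :=
    LinearMap.pi fun e =>
      LinearMap.proj (R := ℝ) (φ := fun _ : V => ℝ) e.1.out.1 - LinearMap.proj e.1.out.2
  have hker : LinearMap.ker Ψ ≤ LinearMap.ker (toLin' (G.lapMatrix ℝ)) := by
    intro x hx
    rw [LinearMap.mem_ker, toLin'_apply, lapMatrix_mulVec_eq_zero_iff_forall_adj]
    intro i j hadj
    have hx' : x (s(i, j)).out.1 = x (s(i, j)).out.2 :=
      sub_eq_zero.mp (congrFun (LinearMap.mem_ker.mp hx) ⟨s(i, j), hadj⟩)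
    rcases Sym2.out_mk_eq_or i j with h | h <;> simp only [h] at hx'
    exacts [hx', hx'.symm]
  have hnullity := LinearMap.finrank_range_add_finrank_ker Ψ
  have hrange : Module.finrank ℝ (LinearMap.range Ψ) ≤ Nat.card G.edgeSet := by
    simpa using Submodule.finrank_le (LinearMap.range Ψ)
  have hcc : Module.finrank ℝ (LinearMap.ker Ψ) ≤ Nat.card G.ConnectedComponent := by
    rw [Nat.card_eq_fintype_card, card_connectedComponent_eq_finrank_ker_toLin'_lapMatrix]
    exact Submodule.finrank_mono hker
  rw [Module.finrank_fintype_fun_eq_card] at hnullity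
  omega

end SimpleGraph

namespace SGPaper.WSG

variable {n : ℕ} (Γ : WSG n)

lemma w_comm (i j : Fin n) : Γ.w i j = Γ.w j i :=
  Γ.symm.apply j i

lemma adj_fromRel_iff {p : ℝ → Prop} (hp : ¬p 0) {i j : Fin n} :
    (SimpleGraph.fromRel fun i j => p (Γ.w i j)).Adj i j ↔ p (Γ.w i j) := by
  rw [SimpleGraph.fromRel_adj, Γ.w_comm j i, or_self]
  exact ⟨And.right, fun h => ⟨fun hij => hp (by rwa [hij, Γ.loopless] at h), h⟩⟩

lemma graph_adj {i j : Fin n} : Γ.graph.Adj i j ↔ Γ.w i j ≠ 0 :=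
  Γ.adj_fromRel_iff (p := (· ≠ 0)) (by simp)

lemma posGraph_adj {i j : Fin n} : Γ.posGraph.Adj i j ↔ 0 < Γ.w i j :=
  Γ.adj_fromRel_iff (p := (0 < ·)) (lt_irrefl 0)

lemma negGraph_adj {i j : Fin n} : Γ.negGraph.Adj i j ↔ Γ.w i j < 0 :=
  Γ.adj_fromRel_iff (p := (· < 0)) (lt_irrefl 0)

lemma card_edgeSet_graph :
    Nat.card Γ.graph.edgeSet = Nat.card Γ.posGraph.edgeSet + Nat.card Γ.negGraph.edgeSet := by
  have hunion : Γ.graph.edgeSet = Γ.posGraph.edgeSet ∪ Γ.negGraph.edgeSet := by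
    ext e
    induction e using Sym2.ind
    simp only [SimpleGraph.mem_edgeSet, Set.mem_union, graph_adj, posGraph_adj, negGraph_adj]
    exact ne_iff_lt_or_gt.trans or_comm
  have hdisj : Disjoint Γ.posGraph.edgeSet Γ.negGraph.edgeSet := by
    rw [Set.disjoint_left]
    intro e
    induction e using Sym2.ind
    simpa [posGraph_adj, negGraph_adj] using le_of_lt
  simp only [Nat.card_coe_set_eq, hunion, Set.ncard_union_eq hdisj]

lemma lap_mulVec_apply (x : Fin n → ℝ) (i : Fin n) :
    (Γ.lap *ᵥ x) i = ∑ j, Γ.w i j * (x j - x i) := by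
  rw [lap, sub_mulVec, Pi.sub_apply, mulVec_diagonal]
  simp only [mulVec, dotProduct, mul_sub, sum_sub_distrib, sum_mul]

lemma dotProduct_lap_mulVec (x : Fin n → ℝ) :
    x ⬝ᵥ Γ.lap *ᵥ x = -(∑ i, ∑ j, Γ.w i j * (x i - x j) ^ 2) / 2 := by
  have h : x ⬝ᵥ Γ.lap *ᵥ x = ∑ i, ∑ j, Γ.w i j * (x i * (x j - x i)) := by
    simp only [dotProduct, lap_mulVec_apply, mul_sum, mul_left_comm]
  have hswap : x ⬝ᵥ Γ.lap *ᵥ x = ∑ i, ∑ j, Γ.w i j * (x j * (x i - x j)) := by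
    rw [h, sum_comm]
    simp only [Γ.w_comm]
  rw [eq_div_iff two_ne_zero, mul_two]
  nth_rewrite 1 [h]
  rw [hswap, ← sum_add_distrib, ← sum_neg_distrib]
  refine sum_congr rfl fun i _ => ?_
  rw [← sum_add_distrib, ← sum_neg_distrib]
  exact sum_congr rfl fun j _ => by ring

lemma comps_le_nZero : comps Γ.graph ≤ Γ.nZero := by
  rw [nZero, Γ.lap_isHermitian.card_eigenvalues_eq_zero, comps, Nat.card_eq_fintype_card,
    SimpleGraph.card_connectedComponent_eq_finrank_ker_toLin'_lapMatrix]
  refine Submodule.finrank_mono fun x hx => ?_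
  rw [LinearMap.mem_ker, toLin'_apply, SimpleGraph.lapMatrix_mulVec_eq_zero_iff_forall_adj] at hx
  rw [LinearMap.mem_ker, toLin'_apply]
  funext i
  rw [lap_mulVec_apply, Pi.zero_apply]
  refine sum_eq_zero fun j _ => ?_
  by_cases hw : Γ.w i j = 0
  · rw [hw, zero_mul]
  · rw [hx j i ((Γ.graph_adj).mpr (Γ.w_comm j i ▸ hw)), sub_self, mul_zero]

lemma mul_dotProduct_lap_mulVec_edgeCombination_pos (hforest : Γ.graph.IsAcyclic) {ε : ℝ}
    {H : SimpleGraph (Fin n)} (hH : ∀ i j, H.Adj i j → ε * Γ.w i j < 0)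
    {c : H.edgeSet → ℝ} (hc : c ≠ 0) :
    0 < ε * (Γ.graph.edgeCombination H.edgeSet c ⬝ᵥ
      Γ.lap *ᵥ Γ.graph.edgeCombination H.edgeSet c) := by
  set x := Γ.graph.edgeCombination H.edgeSet c
  have hterm : ∀ i j, -(ε * Γ.w i j) * (x i - x j) ^ 2
      = if h : s(i, j) ∈ H.edgeSet then -(ε * Γ.w i j) * c ⟨_, h⟩ ^ 2 else 0 := by
    intro i j
    by_cases hw : Γ.w i j = 0
    · simp [hw]
    · rw [hforest.edgeCombination_sub_sq c ((Γ.graph_adj).mpr hw)]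
      split_ifs <;> simp
  have hnonneg : ∀ i j, 0 ≤ -(ε * Γ.w i j) * (x i - x j) ^ 2 := by
    intro i j
    rw [hterm]
    split_ifs with h
    · exact mul_nonneg (neg_nonneg.mpr (hH i j h).le) (sq_nonneg _)
    · exact le_rfl
  obtain ⟨⟨e, he⟩, hce⟩ : ∃ e, c e ≠ 0 := by
    by_contra! h
    exact hc (funext h)
  obtain ⟨a, b, rfl⟩ : ∃ a b, s(a, b) = e := ⟨_, _, Quot.out_eq e⟩
  have hpos : 0 < -(ε * Γ.w a b) * (x a - x b) ^ 2 := by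
    rw [hterm, dif_pos he]
    exact mul_pos (neg_pos.mpr (hH a b he)) (sq_pos_of_ne_zero hce)
  calc 0 < (∑ i, ∑ j, -(ε * Γ.w i j) * (x i - x j) ^ 2) / 2 := by
        refine div_pos (sum_pos' (fun i _ => sum_nonneg fun j _ => hnonneg i j) ?_) two_pos
        exact ⟨a, mem_univ _, sum_pos' (fun j _ => hnonneg a j) ⟨b, mem_univ _, hpos⟩⟩
    _ = ε * (x ⬝ᵥ Γ.lap *ᵥ x) := by
        rw [dotProduct_lap_mulVec, mul_div_assoc', mul_neg, mul_sum]
        simp only [mul_sum, neg_mul, sum_neg_distrib, mul_assoc]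

theorem card_edgeSet_le_card_pos_mul_eigenvalues (hforest : Γ.graph.IsAcyclic) (ε : ℝ)
    (H : SimpleGraph (Fin n)) (hH : ∀ i j, H.Adj i j → ε * Γ.w i j < 0) :
    Nat.card H.edgeSet ≤ #{i | 0 < ε * Γ.lap_isHermitian.eigenvalues i} := by
  rw [Nat.card_eq_fintype_card, ← Module.finrank_fintype_fun_eq_card ℝ]
  exact Γ.lap_isHermitian.finrank_le_card_pos_mul_eigenvalues ε _
    fun _ hc => Γ.mul_dotProduct_lap_mulVec_edgeCombination_pos hforest hH hc

lemma card_negGraph_edgeSet_le_nPos (hforest : Γ.graph.IsAcyclic) :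
    Nat.card Γ.negGraph.edgeSet ≤ Γ.nPos := by
  simpa [nPos] using Γ.card_edgeSet_le_card_pos_mul_eigenvalues hforest 1 Γ.negGraph
    fun i j h => by simpa using (Γ.negGraph_adj).mp h

lemma card_posGraph_edgeSet_le_nNeg (hforest : Γ.graph.IsAcyclic) :
    Nat.card Γ.posGraph.edgeSet ≤ Γ.nNeg := by
  simpa [nNeg] using Γ.card_edgeSet_le_card_pos_mul_eigenvalues hforest (-1) Γ.posGraph
    fun i j h => by simpa using (Γ.posGraph_adj).mp h

lemma nPos_add_nNeg_add_nZero : Γ.nPos + Γ.nNeg + Γ.nZero = n := by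
  simpa [nPos, nNeg, nZero] using card_pos_add_card_neg_add_card_zero Γ.lap_isHermitian.eigenvalues

end SGPaper.WSG

namespace SGPaper

/-- A weighted signed forest on `n` vertices with `m₊` positive edges, `m₋`
negative edges and `c` components has Laplacian inertia
`(m₋, m₊, n - m₊ - m₋)`, and its nullity is `c`. -/
theorem forest_inertia {n : ℕ} (Γ : WSG n) (hforest : Γ.graph.IsAcyclic) :
    Γ.inertia = (Nat.card Γ.negGraph.edgeSet, Nat.card Γ.posGraph.edgeSet,
      n - Nat.card Γ.posGraph.edgeSet - Nat.card Γ.negGraph.edgeSet) ∧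
    Γ.nZero = comps Γ.graph := by
  have hpos := Γ.card_negGraph_edgeSet_le_nPos hforest
  have hneg := Γ.card_posGraph_edgeSet_le_nNeg hforest
  have hzero := Γ.comps_le_nZero
  have hsum := Γ.nPos_add_nNeg_add_nZero
  have hcount := Γ.graph.card_le_card_edgeSet_add_card_connectedComponent
  rw [Fintype.card_fin, Γ.card_edgeSet_graph, ← comps] at hcount
  refine ⟨?_, by omega⟩
  simp only [WSG.inertia, Prod.mk.injEq]
  omega

end SGPaper
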